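/- arXiv:1608.00703 — 3 statements merged into one kernel-verified Lean document; each statement's English description precedes it below -/
import Mathlib

section
/- Let A be a commutative non-archimedean normed ring with ‖1‖ = 1. The set 1 + A(r) := { 1 + f : ‖f‖ < r } for 0 < r ≤ 1 is a subgroup of the unit group A×, and the map f ↦ 1 + f induces a bijection from the additive quotient A(r)/A(r') to the multiplicative quotient (1+A(r))/(1+A(r')) for any 0 < r' < r ≤ 1; moreover if r' ≥ r², this bijection is a group isomorphism. -/
private lemma inv_sub_one_le {A : Type*} [NormedCommRing A]
    (hA : ∀ x y : A, ‖x + y‖ ≤ max ‖x‖ ‖y‖)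
    (u : Aˣ) (hu : ‖(u : A) - 1‖ < 1) :
    ‖((u⁻¹ : Aˣ) : A) - 1‖ ≤ ‖(u : A) - 1‖ := by
  set a := ‖((u⁻¹ : Aˣ) : A) - 1‖ with ha
  set b := ‖(u : A) - 1‖ with hb
  have h1 : ((u⁻¹ : Aˣ) : A) * (1 - u) = ((u⁻¹ : Aˣ) : A) - 1 := by
    rw [mul_sub, mul_one, u.inv_mul]
  have key : ((u⁻¹ : Aˣ) : A) - 1 = (1 - (u : A)) + (((u⁻¹ : Aˣ) : A) - 1) * (1 - u) := by
    rw [show (1 - (u : A)) + (((u⁻¹ : Aˣ) : A) - 1) * (1 - u)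
        = ((u⁻¹ : Aˣ) : A) * (1 - u) from by ring, h1]
  have hbrev : ‖(1 : A) - (u : A)‖ = b := by rw [hb, norm_sub_rev]
  have h2 : a ≤ max b (a * b) := by
    calc a = ‖(1 - (u : A)) + (((u⁻¹ : Aˣ) : A) - 1) * (1 - u)‖ := by rw [ha, ← key]
    _ ≤ max ‖(1 : A) - (u : A)‖ ‖(((u⁻¹ : Aˣ) : A) - 1) * (1 - (u : A))‖ := hA _ _
    _ ≤ max b (a * b) := by
        apply max_le_max (le_of_eq hbrev)
        calc ‖(((u⁻¹ : Aˣ) : A) - 1) * (1 - (u : A))‖ ≤ a * ‖(1 : A) - (u : A)‖ :=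
              norm_mul_le _ _
        _ = a * b := by rw [hbrev]
  have ha0 : 0 ≤ a := norm_nonneg _
  have hb0 : 0 ≤ b := norm_nonneg _
  rcases le_max_iff.mp h2 with h | h
  · exact h
  · nlinarith

/-- In a commutative non-archimedean normed (complete) ring `A`
with `‖1‖ = 1`, for `0 < r ≤ 1` the set `1 + A(r) = {1 + f : ‖f‖ < r}` is a
subgroup of `Aˣ`, and for `0 < r' < r ≤ 1` the map `f ↦ 1 + f` induces a
bijection `A(r)/A(r') ≃ (1+A(r))/(1+A(r'))`; if moreover `r' ≥ r²`, this
bijection is a group isomorphism.  The bijection of quotients is expressed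
via cosets: well-definedness together with injectivity amounts to
`‖f - g‖ < r' ↔ ‖(1+f)(1+g)⁻¹ - 1‖ < r'`, and surjectivity says every unit
`u` with `‖u - 1‖ < r` is of the form `1 + f` with `‖f‖ < r`; being a group
homomorphism amounts to `(1+f)(1+g) ≡ 1 + (f+g) mod A(r')`. -/
theorem stmt2 (A : Type*) [NormedCommRing A] [NormOneClass A] [CompleteSpace A]
    (hA : ∀ x y : A, ‖x + y‖ ≤ max ‖x‖ ‖y‖)
    (r r' : ℝ) (hr'0 : 0 < r') (hr'r : r' < r) (hr1 : r ≤ 1) :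
    -- every `1 + f` with `‖f‖ < r` is a unit
    (∀ f : A, ‖f‖ < r → IsUnit (1 + f)) ∧
    -- `1 + A(r)` is a subgroup of `Aˣ`
    (∃ H : Subgroup Aˣ, ∀ u : Aˣ, u ∈ H ↔ ‖(u : A) - 1‖ < r) ∧
    -- `f ↦ 1 + f` induces a well-defined injection on the quotients
    (∀ f g : A, ‖f‖ < r → ‖g‖ < r → ∀ hg : IsUnit (1 + g),
      (‖f - g‖ < r' ↔ ‖(1 + f) * ((hg.unit⁻¹ : Aˣ) : A) - 1‖ < r')) ∧
    -- surjectivity on the quotients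
    (∀ u : Aˣ, ‖(u : A) - 1‖ < r → ∃ f : A, ‖f‖ < r ∧ (u : A) = 1 + f) ∧
    -- if `r' ≥ r²`, the induced bijection is a group isomorphism
    (r ^ 2 ≤ r' → ∀ f g : A, ‖f‖ < r → ‖g‖ < r →
      ‖(1 + f) * (1 + g) - (1 + (f + g))‖ < r') := by
  have hr0 : 0 < r := hr'0.trans hr'r
  -- units
  have hunit : ∀ f : A, ‖f‖ < r → IsUnit (1 + f) := by
    intro f hf
    have h1 : ‖-f‖ < 1 := by rw [norm_neg]; exact hf.trans_le hr1
    have := (Units.oneSub (-f) h1).isUnit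
    simpa [sub_neg_eq_add] using this
  refine ⟨hunit, ?_, ?_, ?_, ?_⟩
  · -- subgroup
    refine ⟨{ carrier := {u : Aˣ | ‖(u : A) - 1‖ < r}
              one_mem' := by simp [hr0]
              mul_mem' := ?_
              inv_mem' := ?_ }, fun u => Iff.rfl⟩
    · intro u v hu hv
      simp only [Set.mem_setOf_eq] at *
      have key : ((u * v : Aˣ) : A) - 1
          = (((u : A) - 1) * ((v : A) - 1) + ((u : A) - 1)) + ((v : A) - 1) := by
        push_cast; ring
      rw [key]
      refine lt_of_le_of_lt (hA _ _) (max_lt (lt_of_le_of_lt (hA _ _) (max_lt ?_ hu)) hv)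
      calc ‖((u : A) - 1) * ((v : A) - 1)‖ ≤ ‖(u : A) - 1‖ * ‖(v : A) - 1‖ := norm_mul_le _ _
      _ < r * 1 := by
          apply mul_lt_mul' hu.le (hv.trans_le hr1) (norm_nonneg _) hr0
      _ = r := mul_one r
    · intro u hu
      simp only [Set.mem_setOf_eq] at *
      exact (inv_sub_one_le hA u (hu.trans_le hr1)).trans_lt hu
  · -- injectivity / well-definedness
    intro f g hf hg hgu
    set v := hgu.unit with hv
    have hvval : (v : A) = 1 + g := hgu.unit_spec
    have hvsub : ‖(v : A) - 1‖ < r := by rw [hvval]; simpa using hg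
    have hvinv : ‖((v⁻¹ : Aˣ) : A) - 1‖ ≤ ‖(v : A) - 1‖ :=
      inv_sub_one_le hA v (hvsub.trans_le hr1)
    have hvinv1 : ‖((v⁻¹ : Aˣ) : A)‖ ≤ 1 := by
      have : ((v⁻¹ : Aˣ) : A) = (((v⁻¹ : Aˣ) : A) - 1) + 1 := by ring
      rw [this]
      refine (hA _ _).trans (max_le ?_ (by simp))
      exact hvinv.trans ((hvsub.trans_le hr1).le)
    have hvnorm : ‖(v : A)‖ ≤ 1 := by
      have : (v : A) = ((v : A) - 1) + 1 := by ring
      rw [this]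
      refine (hA _ _).trans (max_le ?_ (by simp))
      simpa using (hvsub.trans_le hr1).le
    have keyid : (1 + f) * ((v⁻¹ : Aˣ) : A) - 1 = (f - g) * ((v⁻¹ : Aˣ) : A) := by
      have h1 : (v : A) * ((v⁻¹ : Aˣ) : A) = 1 := v.mul_inv
      calc (1 + f) * ((v⁻¹ : Aˣ) : A) - 1
          = (1 + f) * ((v⁻¹ : Aˣ) : A) - (v : A) * ((v⁻¹ : Aˣ) : A) := by rw [h1]
      _ = ((1 + f) - (v : A)) * ((v⁻¹ : Aˣ) : A) := by ring
      _ = (f - g) * ((v⁻¹ : Aˣ) : A) := by rw [hvval]; ring_nf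
    constructor
    · intro h
      rw [keyid]
      calc ‖(f - g) * ((v⁻¹ : Aˣ) : A)‖ ≤ ‖f - g‖ * ‖((v⁻¹ : Aˣ) : A)‖ := norm_mul_le _ _
      _ ≤ ‖f - g‖ * 1 := mul_le_mul_of_nonneg_left hvinv1 (norm_nonneg _)
      _ = ‖f - g‖ := mul_one _
      _ < r' := h
    · intro h
      have hfg : f - g = ((1 + f) * ((v⁻¹ : Aˣ) : A) - 1) * (v : A) := by
        rw [keyid]
        have h1 : ((v⁻¹ : Aˣ) : A) * (v : A) = 1 := v.inv_mul
        calc f - g = (f - g) * (((v⁻¹ : Aˣ) : A) * (v : A)) := by rw [h1, mul_one]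
        _ = (f - g) * ((v⁻¹ : Aˣ) : A) * (v : A) := by ring
      rw [hfg]
      calc ‖((1 + f) * ((v⁻¹ : Aˣ) : A) - 1) * (v : A)‖
          ≤ ‖(1 + f) * ((v⁻¹ : Aˣ) : A) - 1‖ * ‖(v : A)‖ := norm_mul_le _ _
      _ ≤ ‖(1 + f) * ((v⁻¹ : Aˣ) : A) - 1‖ * 1 :=
          mul_le_mul_of_nonneg_left hvnorm (norm_nonneg _)
      _ = ‖(1 + f) * ((v⁻¹ : Aˣ) : A) - 1‖ := mul_one _
      _ < r' := h
  · -- surjectivity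
    intro u hu
    exact ⟨(u : A) - 1, hu, by ring⟩
  · -- homomorphism
    intro hrr' f g hf hg
    have : (1 + f) * (1 + g) - (1 + (f + g)) = f * g := by ring
    rw [this]
    calc ‖f * g‖ ≤ ‖f‖ * ‖g‖ := norm_mul_le _ _
    _ < r * r := mul_lt_mul'' hf hg (norm_nonneg _) (norm_nonneg _)
    _ = r ^ 2 := (sq r).symm
    _ ≤ r' := hrr'
end

section
/- Every unit of the Tate algebra F⟨t⟩ over a complete non-archimedean field F can be written in the form u·f(t) where u ∈ F× and f ∈ F⟨t⟩ satisfies f(0) = 1 and ‖f - 1‖ < 1 (Gauss norm). -/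
/-!
Since the coefficients of a restricted series tend to zero, a nonzero one has a last index `N`
at which its Gauss norm is attained (it is distinguished of degree `N`, as in Weierstrass
preparation). In the ultrametric product the coefficient of index `N + M` is then dominated by the
single term `a_N b_M`, so degrees add. For a unit `v * g = 1` this forces `N = 0`: the constant
term `c` of `v` strictly dominates all other coefficients, and `v = c · (c⁻¹ v)` with
`‖c⁻¹ v - 1‖ < 1`.
-/

open Filter PowerSeries

/-- A power series is restricted (lies in the Tate algebra `F⟨t⟩`) if its
coefficients tend to zero. -/
def IsRestricted {F : Type*} [NontriviallyNormedField F] (f : PowerSeries F) : Prop :=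
  Tendsto (fun k => ‖PowerSeries.coeff k f‖) atTop (nhds 0)

/-- The Gauss norm `‖∑ cₖ tᵏ‖ = sup |cₖ|` of a power series. -/
noncomputable def gaussNorm {F : Type*} [NontriviallyNormedField F]
    (f : PowerSeries F) : ℝ :=
  ⨆ k : ℕ, ‖PowerSeries.coeff k f‖

lemma IsUltrametricDist.norm_sum_eq_of_forall_norm_lt {M ι : Type*} [SeminormedAddCommGroup M]
    [IsUltrametricDist M] [DecidableEq ι] {s : Finset ι} {a : ι → M} {i₀ : ι} (hi₀ : i₀ ∈ s)
    (h : ∀ i ∈ s, i ≠ i₀ → ‖a i‖ < ‖a i₀‖) :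
    ‖∑ i ∈ s, a i‖ = ‖a i₀‖ := by
  rw [← Finset.add_sum_erase s a hi₀]
  rcases (s.erase i₀).eq_empty_or_nonempty with hempty | hne
  · simp [hempty]
  obtain ⟨i, hi, hle⟩ := exists_norm_finsetSum_le_of_nonempty hne a
  have hlt : ‖∑ i ∈ s.erase i₀, a i‖ < ‖a i₀‖ :=
    hle.trans_lt (h i (Finset.mem_of_mem_erase hi) (Finset.ne_of_mem_erase hi))
  rw [norm_add_eq_max_of_norm_ne_norm hlt.ne', max_eq_left hlt.le]

section Distinguished

variable {R : Type*} [NormedRing R] {f g : R⟦X⟧} {N M : ℕ}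

def IsDistinguished (f : R⟦X⟧) (N : ℕ) : Prop :=
  (∀ k, ‖coeff k f‖ ≤ ‖coeff N f‖) ∧ ∀ k, N < k → ‖coeff k f‖ < ‖coeff N f‖

lemma IsDistinguished.coeff_ne_zero (hf : IsDistinguished f N) (hf0 : f ≠ 0) :
    coeff N f ≠ 0 := by
  contrapose! hf0
  ext k
  simpa [hf0] using hf.1 k

lemma IsDistinguished.norm_coeff_add_mul [NormMulClass R] [IsUltrametricDist R]
    (hf : IsDistinguished f N) (hg : IsDistinguished g M) (hfN : coeff N f ≠ 0)
    (hgM : coeff M g ≠ 0) :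
    ‖coeff (N + M) (f * g)‖ = ‖coeff N f‖ * ‖coeff M g‖ := by
  rw [coeff_mul, IsUltrametricDist.norm_sum_eq_of_forall_norm_lt (i₀ := (N, M))
    (Finset.HasAntidiagonal.mem_antidiagonal.mpr rfl), norm_mul]
  rintro ⟨i, j⟩ hij hne
  rw [Finset.HasAntidiagonal.mem_antidiagonal] at hij
  simp only [norm_mul]
  rcases lt_trichotomy i N with hi | rfl | hi
  · exact mul_lt_mul' (hf.1 i) (hg.2 j (by omega)) (norm_nonneg _) (norm_pos_iff.2 hfN)
  · exact absurd (by rw [show j = M by omega]) hne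
  · exact mul_lt_mul_of_nonneg_of_pos (hf.2 i hi) (hg.1 j) (norm_nonneg _) (norm_pos_iff.2 hgM)

end Distinguished

section Restricted

variable {F : Type*} [NontriviallyNormedField F] {f g : F⟦X⟧}

lemma isRestricted_iff_isRestricted_one : IsRestricted f ↔ PowerSeries.IsRestricted 1 f := by
  simp [_root_.IsRestricted, PowerSeries.isRestricted_iff']

lemma IsRestricted.one : IsRestricted (1 : F⟦X⟧) :=
  isRestricted_iff_isRestricted_one.2 (isRestricted_one 1)

lemma IsRestricted.sub (hf : IsRestricted f) (hg : IsRestricted g) : IsRestricted (f - g) := by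
  rw [isRestricted_iff_isRestricted_one] at *
  simpa [sub_eq_add_neg] using isRestricted.add 1 hf (isRestricted.neg 1 hg)

lemma IsRestricted.C_mul (hf : IsRestricted f) (a : F) : IsRestricted (C a * f) := by
  simpa [_root_.IsRestricted, coeff_C_mul] using hf.const_mul ‖a‖

lemma IsRestricted.finite_setOf_le_norm_coeff (hf : IsRestricted f) {ε : ℝ} (hε : 0 < ε) :
    {k | ε ≤ ‖coeff k f‖}.Finite := by
  have h := hf.eventually (gt_mem_nhds hε)
  rw [← Nat.cofinite_eq_atTop, eventually_cofinite] at h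
  simpa using h

lemma IsRestricted.exists_isDistinguished (hf : IsRestricted f) (hf0 : f ≠ 0) :
    ∃ N, IsDistinguished f N := by
  obtain ⟨n, hn⟩ := exists_coeff_ne_zero_iff_ne_zero.2 hf0
  have hS := hf.finite_setOf_le_norm_coeff (norm_pos_iff.2 hn)
  obtain ⟨j, hjS, hj⟩ := Set.exists_max_image _ (‖coeff · f‖) hS ⟨n, Set.mem_ofPred.2 le_rfl⟩
  have hle : ∀ k, ‖coeff k f‖ ≤ ‖coeff j f‖ := fun k => by
    by_cases hk : ‖coeff n f‖ ≤ ‖coeff k f‖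
    · exact hj k hk
    · exact (not_le.1 hk).le.trans hjS
  obtain ⟨N, hNT, hN⟩ := Set.exists_max_image {k | ‖coeff j f‖ ≤ ‖coeff k f‖} id
    (hS.subset fun _ hk => hjS.trans (Set.mem_ofPred.1 hk)) ⟨j, Set.mem_ofPred.2 le_rfl⟩
  have hNj : ‖coeff N f‖ = ‖coeff j f‖ := le_antisymm (hle N) hNT
  refine ⟨N, fun k => hNj ▸ hle k, fun k hk => hNj ▸ lt_of_not_ge fun hkj => ?_⟩
  exact (hN k hkj).not_gt hk

lemma IsRestricted.gaussNorm_lt (hf : IsRestricted f) {r : ℝ} (h : ∀ k, ‖coeff k f‖ < r) :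
    _root_.gaussNorm f < r := by
  rcases eq_or_ne f 0 with rfl | hf0
  · simpa [_root_.gaussNorm] using h 0
  obtain ⟨N, hN⟩ := hf.exists_isDistinguished hf0
  exact (ciSup_le hN.1).trans_lt (h N)

lemma IsDistinguished.eq_zero_of_mul_eq_one [IsUltrametricDist F] {N : ℕ}
    (hf : IsDistinguished f N) (hg : IsRestricted g) (hfg : f * g = 1) : N = 0 := by
  have hf0 : f ≠ 0 := by rintro rfl; simp at hfg
  have hg0 : g ≠ 0 := by rintro rfl; simp at hfg
  obtain ⟨M, hM⟩ := hg.exists_isDistinguished hg0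
  have hfN := hf.coeff_ne_zero hf0
  have hgM := hM.coeff_ne_zero hg0
  have hNM : coeff (N + M) (f * g) ≠ 0 := by
    rw [← norm_ne_zero_iff, hf.norm_coeff_add_mul hM hfN hgM]
    exact mul_ne_zero (norm_ne_zero_iff.2 hfN) (norm_ne_zero_iff.2 hgM)
  rw [hfg, coeff_one] at hNM
  simp only [ne_eq, ite_eq_right_iff, one_ne_zero, imp_false, not_not] at hNM
  omega

end Restricted

theorem stmt7_general (F : Type*) [NontriviallyNormedField F]
    (hF : ∀ x y : F, ‖x + y‖ ≤ max ‖x‖ ‖y‖)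
    (v : PowerSeries F) (hres : IsRestricted v)
    (hunit : ∃ g : PowerSeries F, IsRestricted g ∧ v * g = 1) :
    ∃ (u : Fˣ) (f : PowerSeries F), IsRestricted f ∧
      PowerSeries.constantCoeff f = 1 ∧ _root_.gaussNorm (f - 1) < 1 ∧
      v = PowerSeries.C (u : F) * f := by
  have : IsUltrametricDist F := .isUltrametricDist_of_forall_norm_add_le_max_norm hF
  obtain ⟨g, hg, hvg⟩ := hunit
  have hv0 : v ≠ 0 := by rintro rfl; simp at hvg
  obtain ⟨N, hN⟩ := hres.exists_isDistinguished hv0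
  obtain rfl := hN.eq_zero_of_mul_eq_one hg hvg
  have hc : constantCoeff v ≠ 0 := by simpa using hN.coeff_ne_zero hv0
  set c := constantCoeff v with hc_def
  have hf := hres.C_mul c⁻¹
  refine ⟨Units.mk0 c hc, C c⁻¹ * v, hf, by simp [← hc_def, hc], ?_,
    by simp [← mul_assoc, ← map_mul, hc]⟩
  refine (hf.sub .one).gaussNorm_lt fun k => ?_
  rcases k with _ | k
  · simp [← hc_def, hc]
  · have hk := hN.2 (k + 1) k.succ_pos
    simp only [coeff_zero_eq_constantCoeff_apply] at hk
    simpa [coeff_C_mul, norm_inv, inv_mul_lt_iff₀ (norm_pos_iff.2 hc)] using hk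

/-- Every unit of the Tate algebra `F⟨t⟩` over a complete
non-archimedean field `F` is of the form `u · f(t)` with `u ∈ Fˣ`,
`f(0) = 1` and `‖f - 1‖ < 1` (Gauss norm). -/
theorem stmt7 (F : Type*) [NontriviallyNormedField F] [CompleteSpace F]
    (hF : ∀ x y : F, ‖x + y‖ ≤ max ‖x‖ ‖y‖)
    (v : PowerSeries F) (hres : IsRestricted v)
    (hunit : ∃ g : PowerSeries F, IsRestricted g ∧ v * g = 1) :
    ∃ (u : Fˣ) (f : PowerSeries F), IsRestricted f ∧
      PowerSeries.constantCoeff f = 1 ∧ _root_.gaussNorm (f - 1) < 1 ∧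
      v = PowerSeries.C (u : F) * f :=
  stmt7_general F hF v hres hunit
end

section
/- Let φ : B → A be a finite injective homomorphism of commutative rings, f ∈ A, and I = φ⁻¹(fA). Then a prime ideal of B contains I if and only if it is the preimage under φ of a prime ideal of A containing f. -/
/-- Let `φ : B → A` be a finite injective homomorphism of
commutative rings, `f ∈ A`, and `I = φ⁻¹(fA)`.  A prime ideal of `B`
contains `I` iff it is the preimage of a prime ideal of `A` containing `f`. -/
theorem stmt10 (B A : Type*) [CommRing B] [CommRing A] [Algebra B A]
    [Module.Finite B A] (hinj : Function.Injective (algebraMap B A)) (f : A) :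
    ∀ p : Ideal B, p.IsPrime →
      (Ideal.comap (algebraMap B A) (Ideal.span {f}) ≤ p ↔
        ∃ q : Ideal A, q.IsPrime ∧ f ∈ q ∧ p = Ideal.comap (algebraMap B A) q) := by
  intro p hp
  constructor
  · intro hle
    obtain ⟨Q, hQge, hQprime, hQcomap⟩ :=
      Ideal.exists_ideal_over_prime_of_isIntegral p (Ideal.span {f}) hle
    exact ⟨Q, hQprime, hQge (Ideal.subset_span rfl), hQcomap.symm⟩
  · rintro ⟨q, hq, hfq, rfl⟩
    exact Ideal.comap_mono (Ideal.span_le.mpr (Set.singleton_subset_iff.mpr hfq))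
end
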